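/- arXiv:2212.06738 — 3 statements merged into one kernel-verified Lean document; each statement's English description precedes it below -/
import Mathlib

section
/- Let A be a finite index set, let R_a be integral domains for a ∈ A, and let P = ∏_{a∈A} R_a. Then every absolute integral closure of P is P-isomorphic (as a P-algebra) to ∏_{a∈A} R_a⁺; in particular, P has a unique absolute integral closure up to P-isomorphism. -/
/-- A ring extension `f : R →+* S` is *tight* if every nonzero ideal of `S` contracts to a
nonzero ideal of `R`. -/
def Tight {R S : Type*} [CommRing R] [CommRing S] (f : R →+* S) : Prop :=
  ∀ s : S, s ≠ 0 → ∃ t : S, ∃ r : R, r ≠ 0 ∧ s * t = f r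

/-- A commutative ring `S` is *absolutely integrally closed* if every monic polynomial of
positive degree over `S` has a root in `S`. -/
def AIClosed (S : Type*) [CommRing S] : Prop :=
  ∀ p : Polynomial S, p.Monic → 0 < p.degree → ∃ x : S, p.IsRoot x

/-- `f : R →+* S` realizes `S` as an *absolute integral closure* of `R`. -/
def IsAIC {R S : Type*} [CommRing R] [CommRing S] (f : R →+* S) : Prop :=
  Function.Injective f ∧ f.IsIntegral ∧ Tight f ∧ AIClosed S

/-! The idempotents `f (Pi.single a 1)` split `S` as `∏ S ⧸ (1 - f (Pi.single a 1))`, and each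
factor is an absolute integral closure of the domain `R a`. An absolute integral closure `T` of a
domain `R` is a domain by tightness, so `IsAlgClosed.lift` embeds it over `R` into an algebraically
closed field `L`; the embedding is injective because `T` is integral over `R`. As `T` is
absolutely integrally closed, every element of the domain `L` integral over `T` already lies in
`T`, so `T` is the integral closure of `R` in `L`. -/

open Polynomial

theorem AIClosed.of_surjective {T T' : Type*} [CommRing T] [CommRing T'] (hT : AIClosed T)
    (π : T →+* T') (hπ : Function.Surjective π) : AIClosed T' := by
  intro p hp hdeg
  have hp0 : p ≠ 0 := fun h => by simp [h] at hdeg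
  have : Nontrivial T' := ⟨p.leadingCoeff, 0, leadingCoeff_ne_zero.2 hp0⟩
  obtain ⟨q, hq, hdeg', hq'⟩ := lifts_and_degree_eq_and_monic
    (lifts_iff_coeff_lifts p |>.mpr fun _ => hπ _) hp
  obtain ⟨x, hx⟩ := hT q hq' (hdeg' ▸ hdeg)
  exact ⟨π x, by rw [IsRoot, ← hq, eval_map, eval₂_at_apply, hx, map_zero]⟩

theorem AIClosed.exists_algebraMap_eq {T L : Type*} [CommRing T] [CommRing L] [IsDomain L]
    [Algebra T L] (hT : AIClosed T) {x : L} (hx : IsIntegral T x) :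
    ∃ y, algebraMap T L y = x := by
  have : Nontrivial T := (algebraMap T L).domain_nontrivial
  obtain ⟨p, hp, hpx⟩ := hx
  induction hn : p.natDegree generalizing p with
  | zero =>
    rw [hp.natDegree_eq_zero.mp hn, eval₂_one] at hpx
    exact absurd hpx one_ne_zero
  | succ n ih =>
    obtain ⟨c, hc⟩ := hT p hp (natDegree_pos_iff_degree_pos.mp (by omega))
    have hfactor := mul_divByMonic_eq_iff_isRoot.mpr hc
    rw [← hfactor, eval₂_mul] at hpx
    rcases mul_eq_zero.mp hpx with hxc | hq
    · rw [eval₂_sub, eval₂_X, eval₂_C, sub_eq_zero] at hxc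
      exact ⟨c, hxc.symm⟩
    · refine ih _ ((monic_X_sub_C c).of_mul_monic_left (by rwa [hfactor])) hq ?_
      rw [natDegree_divByMonic _ (monic_X_sub_C c), natDegree_X_sub_C, hn, Nat.add_sub_cancel]

theorem AIClosed.isIntegralClosure {R T L : Type*} [CommRing R] [CommRing T] [CommRing L]
    [IsDomain L] [Algebra R T] [Algebra R L] [Algebra T L] [IsScalarTower R T L]
    [Algebra.IsIntegral R T] (hT : AIClosed T) (hinj : Function.Injective (algebraMap T L)) :
    IsIntegralClosure T R L where
  algebraMap_injective := hinj
  isIntegral_iff := by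
    refine ⟨fun hx => hT.exists_algebraMap_eq hx.tower_top, ?_⟩
    rintro ⟨y, rfl⟩
    exact (Algebra.IsIntegral.isIntegral y).algebraMap

theorem Tight.isDomain {R S : Type*} [CommRing R] [IsDomain R] [CommRing S] {f : R →+* S}
    (ht : Tight f) (hf : Function.Injective f) : IsDomain S :=
  have : Nontrivial S := hf.nontrivial
  have : NoZeroDivisors S := ⟨fun {x y} hxy => by
    by_contra! hne
    obtain ⟨x', r, hr, hx⟩ := ht x hne.1
    obtain ⟨y', r', hr', hy⟩ := ht y hne.2
    have : f (r * r') = f 0 := by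
      rw [map_mul, ← hx, ← hy, map_zero, mul_mul_mul_comm, hxy, zero_mul]
    exact mul_ne_zero hr hr' (hf this)⟩
  NoZeroDivisors.to_isDomain S

theorem IsAIC.exists_ringEquiv_integralClosure {R T : Type*} [CommRing R] [IsDomain R]
    [CommRing T] (L : Type*) [Field L] [IsAlgClosed L] [Algebra R L] [FaithfulSMul R L]
    {g : R →+* T} (hg : IsAIC g) :
    ∃ ψ : T ≃+* integralClosure R L, ψ.toRingHom.comp g = algebraMap R (integralClosure R L) := by
  let : Algebra R T := g.toAlgebra
  obtain ⟨hinj, hint, htight, hai⟩ := hg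
  have : IsDomain T := htight.isDomain hinj
  have : FaithfulSMul R T := (faithfulSMul_iff_algebraMap_injective R T).mpr hinj
  have : Algebra.IsIntegral R T := ⟨hint⟩
  let φ : T →ₐ[R] L := IsAlgClosed.lift
  have hφ : Function.Injective φ := by
    refine (RingHom.injective_iff_ker_eq_bot (φ : T →+* L)).mpr
      (Ideal.eq_bot_of_comap_eq_bot (R := R) ?_)
    rw [RingHom.comap_ker, φ.comp_algebraMap]
    exact (RingHom.injective_iff_ker_eq_bot _).mp (FaithfulSMul.algebraMap_injective R L)
  let : Algebra T L := φ.toRingHom.toAlgebra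
  have : IsScalarTower R T L := .of_algebraMap_eq' φ.comp_algebraMap.symm
  have : IsIntegralClosure T R L := hai.isIntegralClosure hφ
  let ψ := IsIntegralClosure.equiv R T L (integralClosure R L)
  exact ⟨ψ.toRingEquiv, ψ.toAlgHom.comp_algebraMap⟩

theorem IsIdempotentElem.mem_span_one_sub_iff {T : Type*} [CommRing T] {ε : T}
    (hε : IsIdempotentElem ε) {x : T} : x ∈ Ideal.span {1 - ε} ↔ x * ε = 0 := by
  rw [← hε.ker_toSpanSingleton_eq_span]
  rfl

section IdempotentQuotient

variable {P Q S : Type*} [CommRing P] [CommRing Q] [CommRing S] {f : P →+* S} {e : P}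

theorem IsAIC.of_comp_eq_mk (hf : IsAIC f) (he : IsIdempotentElem e) {π : P →+* Q}
    (hπ : Function.Surjective π) (hker : RingHom.ker π = Ideal.span {1 - e})
    {g : Q →+* S ⧸ Ideal.span {1 - f e}} (hg : g.comp π = (Ideal.Quotient.mk _).comp f) :
    IsAIC g := by
  obtain ⟨hinj, hint, htight, hai⟩ := hf
  have hfe := he.map f
  have hπ_eq_zero (p : P) : π p = 0 ↔ p * e = 0 := by
    rw [← RingHom.mem_ker, hker, he.mem_span_one_sub_iff]
  have hg_apply (p : P) : g (π p) = Ideal.Quotient.mk _ (f p) := RingHom.congr_fun hg p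
  have hmk_fe : Ideal.Quotient.mk (Ideal.span {1 - f e}) (f e) = 1 := by
    rw [← sub_eq_zero, ← map_one (Ideal.Quotient.mk _), ← map_sub,
      Ideal.Quotient.eq_zero_iff_mem]
    exact Ideal.mem_span_singleton.mpr ⟨-1, by ring⟩
  refine ⟨?_, ?_, ?_, hai.of_surjective _ Ideal.Quotient.mk_surjective⟩
  · refine (injective_iff_map_eq_zero g).mpr fun q hq => ?_
    obtain ⟨p, rfl⟩ := hπ q
    rw [hg_apply, Ideal.Quotient.eq_zero_iff_mem, hfe.mem_span_one_sub_iff, ← map_mul,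
      ← map_zero f] at hq
    exact (hπ_eq_zero p).mpr (hinj hq)
  · refine RingHom.IsIntegral.tower_top π g ?_
    rw [hg]
    exact hint.trans _ _ (RingHom.isIntegral_of_surjective _ Ideal.Quotient.mk_surjective)
  · intro x hx
    obtain ⟨s, rfl⟩ := Ideal.Quotient.mk_surjective x
    have hs : s * f e ≠ 0 := fun h =>
      hx (Ideal.Quotient.eq_zero_iff_mem.mpr (hfe.mem_span_one_sub_iff.mpr h))
    obtain ⟨t, r, hr, hst⟩ := htight _ hs
    have hre : r * e = r := hinj <| by
      rw [map_mul, ← hst, mul_right_comm, mul_assoc s, hfe.eq]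
    refine ⟨Ideal.Quotient.mk _ t, π r, fun h => hr ?_, ?_⟩
    · rw [← hre, ← hπ_eq_zero, h]
    · rw [hg_apply, ← hst, map_mul, map_mul, hmk_fe, mul_one]

theorem IsAIC.exists_comp_eq_mk (hf : IsAIC f) (he : IsIdempotentElem e) (π : P →+* Q)
    (hπ : Function.Surjective π) (hker : RingHom.ker π = Ideal.span {1 - e}) :
    ∃ g : Q →+* S ⧸ Ideal.span {1 - f e},
      g.comp π = (Ideal.Quotient.mk _).comp f ∧ IsAIC g := by
  have hle : RingHom.ker π ≤ RingHom.ker ((Ideal.Quotient.mk (Ideal.span {1 - f e})).comp f) := by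
    rw [hker, Ideal.span_le, Set.singleton_subset_iff, SetLike.mem_coe, RingHom.mem_ker,
      RingHom.comp_apply, map_sub, map_one, Ideal.Quotient.eq_zero_iff_mem]
    exact Ideal.mem_span_singleton_self _
  have hg := π.liftOfSurjective_comp hπ ⟨_, hle⟩
  exact ⟨_, hg, hf.of_comp_eq_mk he hπ hker hg⟩

end IdempotentQuotient

/-- Every absolute integral closure of a finite product `P = ∏ R_a` of domains is
`P`-isomorphic to `∏ R_a⁺`; so `P` has a unique aic up to `P`-isomorphism. -/
theorem aic_of_finite_product_of_domains_unique (A : Type u) [Finite A]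
    (R : A → Type v) [∀ a, CommRing (R a)] [∀ a, IsDomain (R a)]
    (S : Type w) [CommRing S] (f : (∀ a, R a) →+* S) (hf : IsAIC f) :
    ∃ e : S ≃+* ∀ a, integralClosure (R a) (AlgebraicClosure (FractionRing (R a))),
      e.toRingHom.comp f =
        Pi.ringHom fun a =>
          (algebraMap (R a)
            (integralClosure (R a) (AlgebraicClosure (FractionRing (R a))))).comp
            (Pi.evalRingHom R a) := by
  classical
  cases nonempty_fintype A
  have hP := CompleteOrthogonalIdempotents.single R
  choose g hgπ hg using fun a => hf.exists_comp_eq_mk (hP.idem a) (Pi.evalRingHom R a)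
    (fun x => ⟨Pi.single a x, Pi.single_eq_same a x⟩) (RingHom.ker_evalRingHom R a)
  have (a : A) : FaithfulSMul (R a) (AlgebraicClosure (FractionRing (R a))) :=
    .trans _ (FractionRing (R a)) _
  choose φ hφ using fun a =>
    (hg a).exists_ringEquiv_integralClosure (AlgebraicClosure (FractionRing (R a)))
  refine ⟨(RingEquiv.ofBijective _ (hP.map f).bijective_pi).trans (RingEquiv.piCongrRight φ), ?_⟩
  refine RingHom.ext fun p => funext fun a => ?_
  exact (congrArg (φ a) (RingHom.congr_fun (hgπ a) p).symm).trans (RingHom.congr_fun (hφ a) (p a))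
end

section
/- Let A be an arbitrary index set, let R_a be integral domains for a ∈ A, let P = ∏_{a∈A} R_a, and let R be a subring of P such that P is integral over R and the extension R ⊆ P is tight. Let T be the integral closure of R in ∏_{a∈A} R_a⁺. Then T is an absolute integral closure of R, and it is universal: for every absolute integral closure S of R there exists an injective R-algebra homomorphism from S into T. -/
/-!
`T` is absolutely integrally closed because `∏ R_a⁺` is, and a root in `∏ R_a⁺` of a monic
polynomial over `T` is integral over `T`, hence over `R`. For tightness, a nonzero `s ∈ T` has a
nonzero component `s_a`; since `s_a` is integral over `R_a` inside a domain, `s_a q(s_a)` is a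
nonzero `c ∈ R_a` for some `q ∈ R_a[X]`. Lifting `q` to `P[X]` and cutting with the idempotent
`e_a`, the element `t = e_a q(s)` lies in `T` (which contains `P`, as `P` is integral over `R`) and
`s t = e_a c` is a nonzero element of `P`; tightness of `R ⊆ P` then brings it down to `R`.
For universality, lying over `ker (R → R_a)` gives a prime of `S` whose quotient, integral over
`R ⧸ ker`, embeds into the algebraic closure of `Frac R_a`, necessarily inside `R_a⁺`. The product
of these maps `S → T` is injective because `S` is tight over `R` and `R → T` is injective.
-/

set_option synthInstance.maxHeartbeats 1000000
set_option maxHeartbeats 1000000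

/-- The integral closure of `R` in `B` along a ring homomorphism `g : R →+* B`,
as a subring of `B`. -/
noncomputable def intClosure {R B : Type*} [CommRing R] [CommRing B] (g : R →+* B) :
    Subring B :=
  letI := g.toAlgebra
  (integralClosure R B).toSubring

/-- The corestriction of `g : R →+* B` to the integral closure of `R` in `B`. -/
noncomputable def intClosureMap {R B : Type*} [CommRing R] [CommRing B] (g : R →+* B) :
    R →+* intClosure g :=
  g.codRestrict (intClosure g) fun x => by
    letI := g.toAlgebra
    exact (integralClosure R B).algebraMap_mem x

/-- The componentwise map from a product of domains into the product of their `R⁺`'s. -/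
noncomputable def piPlusMap (A : Type u) (R : A → Type v)
    [∀ a, CommRing (R a)] [∀ a, IsDomain (R a)] :
    (∀ a, R a) →+*
      ∀ a, integralClosure (R a) (AlgebraicClosure (FractionRing (R a))) :=
  Pi.ringHom fun a =>
    (algebraMap (R a)
      (integralClosure (R a) (AlgebraicClosure (FractionRing (R a))))).comp
      (Pi.evalRingHom R a)

open Polynomial

lemma aiClosed_of_isAlgClosed (K : Type*) [Field K] [IsAlgClosed K] : AIClosed K :=
  fun p _ hd => IsAlgClosed.exists_root p fun h => by simp [h] at hd

lemma aiClosed_pi {A : Type*} {B : A → Type*} [∀ a, CommRing (B a)]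
    (h : ∀ a, AIClosed (B a)) : AIClosed (∀ a, B a) := by
  intro p hm hd
  have hroot : ∀ a, ∃ x : B a, (p.map (Pi.evalRingHom B a)).IsRoot x := fun a => by
    rcases subsingleton_or_nontrivial (B a) with _ | _
    · exact ⟨0, Subsingleton.elim _ _⟩
    · exact h a _ (hm.map _) (by rwa [hm.degree_map])
  choose x hx using hroot
  refine ⟨x, funext fun a => ?_⟩
  have hxa := hx a
  rwa [IsRoot.def, eval_map, show x a = Pi.evalRingHom B a x from rfl, eval₂_hom] at hxa

lemma aiClosed_integralClosure {R B : Type*} [CommRing R] [CommRing B] [Algebra R B]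
    (hB : AIClosed B) : AIClosed (integralClosure R B) := by
  intro p hm hd
  rcases subsingleton_or_nontrivial B with _ | _
  · exact ⟨0, Subsingleton.elim _ _⟩
  obtain ⟨x, hx⟩ := hB (p.map (algebraMap (integralClosure R B) B)) (hm.map _)
    (by rwa [hm.degree_map])
  have hxR : IsIntegral R x := isIntegral_trans x ⟨p, hm, by rwa [← eval_map]⟩
  exact ⟨⟨x, hxR⟩, hx.of_map Subtype.val_injective⟩

lemma Tight.comp {R S T : Type*} [CommRing R] [CommRing S] [CommRing T] {g : S →+* T}
    {f : R →+* S} (hg : Tight g) (hf : Tight f) : Tight (g.comp f) := by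
  intro x hx
  obtain ⟨y, s, hs, hxy⟩ := hg x hx
  obtain ⟨z, r, hr, hsz⟩ := hf s hs
  exact ⟨y * g z, r, hr, by rw [← mul_assoc, hxy, ← map_mul, hsz, RingHom.comp_apply]⟩

lemma Tight.injective_of_injective_comp {R S T : Type*} [CommRing R] [CommRing S] [CommRing T]
    {g : S →+* T} {f : R →+* S} (hf : Tight f) (hgf : Function.Injective (g.comp f)) :
    Function.Injective g := by
  refine (injective_iff_map_eq_zero g).mpr fun s hs => by_contra fun hs0 => ?_
  obtain ⟨t, r, hr, hst⟩ := hf s hs0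
  refine hr (hgf ?_)
  rw [map_zero, RingHom.comp_apply, ← hst, map_mul, hs, zero_mul]

section intClosure

variable {R B : Type*} [CommRing R] [CommRing B] (g : R →+* B)

lemma intClosureMap_injective (hg : Function.Injective g) :
    Function.Injective (intClosureMap g) :=
  fun _ _ h => hg (congrArg Subtype.val h)

lemma intClosureMap_isIntegral : (intClosureMap g).IsIntegral := fun y =>
  RingHom.IsIntegralElem.of_map (g := (intClosure g).subtype) Subtype.val_injective y.2

lemma aiClosed_intClosure (hB : AIClosed B) : AIClosed (intClosure g) :=
  let _ := g.toAlgebra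
  aiClosed_integralClosure hB

lemma map_mem_intClosure {S : Type*} [CommRing S] {f : R →+* S} (hf : f.IsIntegral)
    {φ : S →+* B} (hφ : φ.comp f = g) (s : S) : φ s ∈ intClosure g :=
  hφ ▸ (hf s).map φ

end intClosure

theorem IsIntegral.exists_mul_aeval_eq_algebraMap {R C : Type*} [CommRing R] [CommRing C]
    [IsDomain C] [Algebra R C] {x : C} (hx : IsIntegral R x) (hx0 : x ≠ 0) :
    ∃ (q : R[X]) (c : R), c ≠ 0 ∧ x * aeval x q = algebraMap R C c := by
  have := (algebraMap R C).domain_nontrivial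
  let x' : Algebra.adjoin R {x} := ⟨x, Algebra.subset_adjoin rfl⟩
  have hx' : IsIntegral R x' :=
    (isIntegral_algHom_iff (Algebra.adjoin R {x}).val Subtype.val_injective).mp hx
  obtain ⟨c, hc, hc0⟩ := (Submodule.ne_bot_iff _).mp <|
    Ideal.comap_ne_bot_of_integral_mem (I := Ideal.span {x'})
      (fun h => hx0 (congrArg Subtype.val h)) (Ideal.mem_span_singleton_self x') hx'
  obtain ⟨⟨y, hy⟩, hyc⟩ := Ideal.mem_span_singleton'.mp hc
  rw [Algebra.adjoin_singleton_eq_range_aeval] at hy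
  obtain ⟨q, rfl⟩ := hy
  exact ⟨q, c, hc0, by rw [mul_comm]; exact congrArg Subtype.val hyc⟩

theorem RingHom.IsIntegral.exists_comp_eq_of_isAlgClosed {R S K : Type*} [CommRing R]
    [CommRing S] [Field K] [IsAlgClosed K] {g : R →+* S} (hg : g.IsIntegral) (j : R →+* K)
    (hker : RingHom.ker g ≤ RingHom.ker j) : ∃ φ : S →+* K, φ.comp g = j := by
  let _ := g.toAlgebra
  have : Algebra.IsIntegral R S := ⟨hg⟩
  have := RingHom.ker_isPrime j
  obtain ⟨Q, -, _, hQ⟩ := Ideal.exists_ideal_over_prime_of_isIntegral (RingHom.ker j) ⊥ hker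
  have : Q.LiesOver (RingHom.ker j) := ⟨hQ.symm⟩
  let _ := (RingHom.kerLift j).toAlgebra
  have : Module.IsTorsionFree (R ⧸ RingHom.ker j) K :=
    Module.isTorsionFree_iff_algebraMap_injective.mpr (RingHom.kerLift_injective j)
  have : Module.IsTorsionFree (R ⧸ RingHom.ker j) (S ⧸ Q) :=
    Module.isTorsionFree_iff_algebraMap_injective.mpr (FaithfulSMul.algebraMap_injective _ _)
  let ψ : S ⧸ Q →ₐ[R ⧸ RingHom.ker j] K := IsAlgClosed.lift
  exact ⟨ψ.toRingHom.comp (Ideal.Quotient.mk Q),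
    RingHom.ext fun r => ψ.commutes (Ideal.Quotient.mk _ r)⟩

theorem RingHom.IsIntegral.exists_comp_eq_integralClosure {R₀ S R K : Type*} [CommRing R₀]
    [CommRing S] [CommRing R] [Field K] [IsAlgClosed K] [Algebra R K] {g : R₀ →+* S}
    (hg : g.IsIntegral) (hg_inj : Function.Injective g) (j : R₀ →+* R) :
    ∃ φ : S →+* integralClosure R K, φ.comp g = (algebraMap R (integralClosure R K)).comp j := by
  obtain ⟨φ, hφ⟩ := hg.exists_comp_eq_of_isAlgClosed ((algebraMap R K).comp j) <| by
    simp [(RingHom.injective_iff_ker_eq_bot g).mp hg_inj]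
  refine ⟨φ.codRestrict _ fun s => ?_, RingHom.ext fun r => Subtype.ext (RingHom.congr_fun hφ r)⟩
  exact RingHom.IsIntegralElem.of_comp (f := j) (hφ ▸ (hg s).map φ)

section Pi

variable {A : Type*} (R B : A → Type*) [∀ a, CommRing (R a)] [∀ a, CommRing (B a)]
  [∀ a, Algebra (R a) (B a)]

noncomputable def piAlgebraMap : (∀ a, R a) →+* ∀ a, B a :=
  RingHom.pi fun a => (algebraMap (R a) (B a)).comp (Pi.evalRingHom R a)

variable {R B}

lemma piAlgebraMap_injective (h : ∀ a, Function.Injective (algebraMap (R a) (B a))) :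
    Function.Injective (piAlgebraMap R B) :=
  fun _ _ hxy => funext fun a => h a (congrFun hxy a)

lemma eval₂_piAlgebraMap_apply (Q : (∀ a, R a)[X]) (s : ∀ a, B a) (a : A) :
    Q.eval₂ (piAlgebraMap R B) s a = aeval (s a) (Q.map (Pi.evalRingHom R a)) := by
  rw [aeval_def, eval₂_map]
  exact hom_eval₂ Q (piAlgebraMap R B) (Pi.evalRingHom B a) s

variable [∀ a, IsDomain (B a)] [∀ a, Algebra.IsIntegral (R a) (B a)]

lemma exists_mul_eq_piAlgebraMap_single [DecidableEq A] {s : ∀ a, B a} {a : A} (hs : s a ≠ 0) :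
    ∃ (Q : (∀ a, R a)[X]) (c : R a), c ≠ 0 ∧
      s * (piAlgebraMap R B (Pi.single a 1) * Q.eval₂ (piAlgebraMap R B) s) =
        piAlgebraMap R B (Pi.single a c) := by
  obtain ⟨q, c, hc, hqc⟩ :=
    (Algebra.IsIntegral.isIntegral (R := R a) (s a)).exists_mul_aeval_eq_algebraMap hs
  obtain ⟨Q, rfl⟩ := map_surjective (Pi.evalRingHom R a) (Function.surjective_eval a) q
  refine ⟨Q, c, hc, funext fun b => ?_⟩
  rcases eq_or_ne b a with rfl | hb
  · rw [Pi.mul_apply, Pi.mul_apply, eval₂_piAlgebraMap_apply]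
    simp [piAlgebraMap, hqc]
  · simp [piAlgebraMap, Pi.single_eq_of_ne hb]

lemma tight_codRestrict_piAlgebraMap (T : Subring (∀ a, B a))
    (hT : ∀ p, piAlgebraMap R B p ∈ T) : Tight ((piAlgebraMap R B).codRestrict T hT) := by
  classical
  rintro ⟨s, hsT⟩ hs
  obtain ⟨a, ha⟩ := Function.ne_iff.mp (show s ≠ 0 from fun h => hs (Subtype.ext h))
  obtain ⟨Q, c, hc, hQc⟩ := exists_mul_eq_piAlgebraMap_single (R := R) ha
  have hQT : Q.eval₂ (piAlgebraMap R B) s ∈ T :=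
    hom_eval₂ Q ((piAlgebraMap R B).codRestrict T hT) T.subtype ⟨s, hsT⟩ ▸ SetLike.coe_mem _
  exact ⟨⟨_, mul_mem (hT _) hQT⟩, Pi.single a c, Pi.single_ne_zero_iff.mpr hc, Subtype.ext hQc⟩

end Pi

lemma piPlusMap_injective (A : Type*) (R : A → Type*) [∀ a, CommRing (R a)]
    [∀ a, IsDomain (R a)] : Function.Injective (piPlusMap A R) := by
  refine piAlgebraMap_injective fun a x y hxy => ?_
  have h : algebraMap (R a) (AlgebraicClosure (FractionRing (R a))) x = algebraMap _ _ y :=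
    congrArg Subtype.val hxy
  rw [IsScalarTower.algebraMap_apply (R a) (FractionRing (R a)),
    IsScalarTower.algebraMap_apply (R a) (FractionRing (R a))] at h
  exact IsFractionRing.injective _ (FractionRing (R a)) ((algebraMap _ _).injective h)

/-- If `R` is a subring of a product `P` of domains over which `P` is integral and tight,
then the integral closure `T` of `R` in `∏ R_a⁺` is an absolute integral closure of `R`,
and it is universal: every aic of `R` embeds into `T` over `R`. -/
theorem universal_aic_of_subring_of_product_of_domains
    (A : Type u) (R : A → Type v) [∀ a, CommRing (R a)] [∀ a, IsDomain (R a)]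
    (R₀ : Type w) [CommRing R₀] (i : R₀ →+* ∀ a, R a)
    (hinj : Function.Injective i) (hint : i.IsIntegral) (htight : Tight i) :
    IsAIC (intClosureMap ((piPlusMap A R).comp i)) ∧
      ∀ (S : Type x) [CommRing S] (g : R₀ →+* S), IsAIC g →
        ∃ h : S →+* intClosure ((piPlusMap A R).comp i),
          Function.Injective h ∧ h.comp g = intClosureMap ((piPlusMap A R).comp i) := by
  have hT_inj :=
    intClosureMap_injective ((piPlusMap A R).comp i) ((piPlusMap_injective A R).comp hinj)
  have hπT : ∀ p, piPlusMap A R p ∈ intClosure ((piPlusMap A R).comp i) :=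
    map_mem_intClosure _ hint rfl
  refine ⟨⟨hT_inj, intClosureMap_isIntegral _, (tight_codRestrict_piAlgebraMap _ hπT).comp htight,
    aiClosed_intClosure _ <| aiClosed_pi fun a =>
      aiClosed_integralClosure (aiClosed_of_isAlgClosed _)⟩, ?_⟩
  rintro S _ g ⟨hg_inj, hg_int, hg_tight, -⟩
  choose φ hφ using fun a => hg_int.exists_comp_eq_integralClosure
    (K := AlgebraicClosure (FractionRing (R a))) hg_inj ((Pi.evalRingHom R a).comp i)
  have hΦ : (RingHom.pi φ).comp g = (piPlusMap A R).comp i :=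
    RingHom.ext fun r => funext fun a => RingHom.congr_fun (hφ a) r
  let h := (RingHom.pi φ).codRestrict _ (map_mem_intClosure _ hg_int hΦ)
  have hh : h.comp g = intClosureMap ((piPlusMap A R).comp i) :=
    RingHom.ext fun r => Subtype.ext (RingHom.congr_fun hΦ r)
  exact ⟨h, hg_tight.injective_of_injective_comp (hh ▸ hT_inj), hh⟩
end

section
/- Let R be a reduced commutative ring with exactly n minimal prime ideals (n finite), and set T = ∏_{p ∈ min(R)} (R/p)⁺ with its canonical R-algebra structure. An absolute integral closure S of R is R-isomorphic to T if and only if S has exactly 2^n idempotent elements. -/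
/-- Minimal primes are prime. -/
instance minimalPrimes.isPrime' {R : Type u} [CommRing R] (p : minimalPrimes R) :
    (p : Ideal R).IsPrime := p.2.1.1

/-- The canonical map `R → T = ∏_{p ∈ min(R)} (R/p)⁺`. -/
noncomputable def minPlusMap (R : Type u) [CommRing R] :
    R →+* ∀ p : minimalPrimes R,
      integralClosure (R ⧸ (p : Ideal R))
        (AlgebraicClosure (FractionRing (R ⧸ (p : Ideal R)))) :=
  Pi.ringHom fun p =>
    (algebraMap (R ⧸ (p : Ideal R))
      (integralClosure (R ⧸ (p : Ideal R))
        (AlgebraicClosure (FractionRing (R ⧸ (p : Ideal R)))))).comp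
      (Ideal.Quotient.mk (p : Ideal R))

/-!
Choose for each minimal prime `p` of `R` a prime `Q p` of `S` lying over it. Tightness forces
`⋂ Q p = 0`, since this ideal contracts to `⋂ p = 0`; so an idempotent of `S` is determined by
which `Q p` contain it, and `S` has at most `2 ^ n` idempotents. When it has exactly `2 ^ n`, every
membership pattern occurs, and an idempotent lying outside `Q p` but inside every other `Q p'`
makes the `Q p` pairwise comaximal. The Chinese remainder theorem then gives `S ≅ ∏ S ⧸ Q p`,
and each `S ⧸ Q p` is an absolutely integrally closed domain integral over `R ⧸ p`, hence is
`(R ⧸ p)⁺`. Conversely a product of `n` domains has `2 ^ n` idempotents.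
-/

open Function Polynomial

theorem AIClosed.of_surjective_s18 {S S' : Type*} [CommRing S] [CommRing S'] (h : AIClosed S)
    (f : S →+* S') (hf : Function.Surjective f) : AIClosed S' := by
  intro p hp hdeg
  nontriviality S'
  obtain ⟨q, hqp, hdeg_eq, hq⟩ :=
    lifts_and_natDegree_eq_and_monic ((lifts_iff_coeff_lifts p).mpr fun _ => hf _) hp
  obtain ⟨x, hx⟩ := h q hq (natDegree_pos_iff_degree_pos.mp
    (hdeg_eq ▸ natDegree_pos_iff_degree_pos.mpr hdeg))
  exact ⟨f x, by rw [← hqp, IsRoot, eval_map, eval₂_at_apply, hx.eq_zero, map_zero]⟩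

theorem AIClosed.splits {S : Type*} [CommRing S] (h : AIClosed S) {p : S[X]} (hp : p.Monic) :
    p.Splits := by
  induction hd : p.natDegree generalizing p with
  | zero => exact Splits.of_natDegree_eq_zero hd
  | succ d ih =>
    obtain _ | _ := subsingleton_or_nontrivial S
    · simp [Subsingleton.elim p 0] at hd
    obtain ⟨x, hx⟩ := h p hp (natDegree_pos_iff_degree_pos.mp (by omega))
    obtain ⟨q, rfl⟩ := dvd_iff_isRoot.mpr hx
    have hq : q.Monic := (monic_X_sub_C x).of_mul_monic_left hp
    refine (Splits.X_sub_C x).mul (ih hq ?_)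
    rw [(monic_X_sub_C x).natDegree_mul hq, natDegree_X_sub_C] at hd
    omega

theorem AIClosed.nonempty_algEquiv_integralClosure {A D Ω : Type*} [CommRing A] [IsDomain A]
    [CommRing D] [IsDomain D] [Algebra A D] [Module.IsTorsionFree A D] [Algebra.IsIntegral A D]
    [Field Ω] [IsAlgClosed Ω] [Algebra A Ω] [Module.IsTorsionFree A Ω] (hD : AIClosed D) :
    Nonempty (D ≃ₐ[A] integralClosure A Ω) := by
  let Θ : D →ₐ[A] Ω := IsAlgClosed.lift
  have hΘ_injective : Function.Injective Θ := by
    rw [RingHom.injective_iff_ker_eq_bot]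
    apply Ideal.eq_bot_of_comap_eq_bot (R := A)
    ext a
    simp
  have hΘ_range : ∀ z : Ω, IsIntegral A z → z ∈ Set.range Θ := by
    rintro z ⟨p, hp, hpz⟩
    have hz : z ∈ p.rootSet Ω := (mem_rootSet_of_ne hp.ne_zero).mpr hpz
    rw [← (hD.splits (hp.map _)).image_rootSet_of_map_ne_zero Θ (hp.map _).ne_zero] at hz
    exact Set.mem_range_of_mem_image _ _ hz
  refine ⟨AlgEquiv.ofBijective (Θ.codRestrict _ fun d => (Algebra.IsIntegral.isIntegral d).map Θ)
    ⟨fun d d' h => hΘ_injective (congrArg Subtype.val h), ?_⟩⟩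
  rintro ⟨z, hz⟩
  obtain ⟨d, rfl⟩ := hΘ_range z hz
  exact ⟨d, rfl⟩

theorem Tight.iInf_eq_bot {R S ι : Type*} [CommRing R] [CommRing S] {f : R →+* S} (hf : Tight f)
    {Q : ι → Ideal S} (hQ : ⨅ i, (Q i).comap f = ⊥) : ⨅ i, Q i = ⊥ := by
  refine (Submodule.eq_bot_iff _).mpr fun s hs => by_contra fun hs0 => ?_
  obtain ⟨t, r, hr, hst⟩ := hf s hs0
  have hr_mem : r ∈ ⨅ i, (Q i).comap f := by
    simp only [Ideal.mem_iInf, Ideal.mem_comap, ← hst] at hs ⊢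
    exact fun i => Ideal.mul_mem_right _ _ (hs i)
  rw [hQ] at hr_mem
  exact hr hr_mem

theorem iInf_minimalPrimes_eq_bot (R : Type*) [CommRing R] [IsReduced R] :
    ⨅ p : minimalPrimes R, (p : Ideal R) = ⊥ := by
  rw [← sInf_eq_iInf', minimalPrimes, Ideal.sInf_minimalPrimes]
  exact nilradical_eq_zero R

section Idempotents

variable {S : Type*} [CommRing S]

theorem IsIdempotentElem.one_sub_mem_of_notMem {e : S} (he : IsIdempotentElem e) {P : Ideal S}
    [P.IsPrime] (h : e ∉ P) : 1 - e ∈ P :=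
  (Ideal.IsPrime.mem_or_mem ‹_› (he.mul_one_sub_self ▸ P.zero_mem)).resolve_left h

theorem IsIdempotentElem.sub_mem_of_mem_iff {e e' : S} (he : IsIdempotentElem e)
    (he' : IsIdempotentElem e') {P : Ideal S} [P.IsPrime] (h : e ∈ P ↔ e' ∈ P) : e - e' ∈ P := by
  by_cases hP : e ∈ P
  · exact P.sub_mem hP (h.mp hP)
  · simpa only [sub_sub_sub_cancel_left] using
      P.sub_mem (he'.one_sub_mem_of_notMem (h.not.mp hP)) (he.one_sub_mem_of_notMem hP)

theorem IsIdempotentElem.eq_of_forall_mem_iff {ι : Type*} {Q : ι → Ideal S} [∀ i, (Q i).IsPrime]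
    (hQ : ⨅ i, Q i = ⊥) {e e' : S} (he : IsIdempotentElem e) (he' : IsIdempotentElem e')
    (h : ∀ i, e ∈ Q i ↔ e' ∈ Q i) : e = e' := by
  rw [← sub_eq_zero, ← Ideal.mem_bot, ← hQ, Ideal.mem_iInf]
  exact fun i => he.sub_mem_of_mem_iff he' (h i)

theorem pairwise_isCoprime_of_card_isIdempotentElem {ι : Type*} [Finite ι] {Q : ι → Ideal S}
    [∀ i, (Q i).IsPrime] (hQ : ⨅ i, Q i = ⊥)
    (hcard : Nat.card {e : S // IsIdempotentElem e} = 2 ^ Nat.card ι) :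
    Pairwise (IsCoprime on Q) := by
  let χ : {e : S // IsIdempotentElem e} → ι → Prop := fun e i => (e : S) ∈ Q i
  have hχ : Function.Bijective χ := by
    refine Function.Injective.bijective_of_nat_card_le (fun e e' h => Subtype.ext ?_) ?_
    · exact e.2.eq_of_forall_mem_iff hQ e'.2 fun i => iff_of_eq (congrFun h i)
    · simp [hcard, Nat.card_fun]
  intro i j hij
  obtain ⟨⟨e, he⟩, hχe⟩ := hχ.2 fun k => k ≠ j
  have hmem (k : ι) : e ∈ Q k ↔ k ≠ j := iff_of_eq (congrFun hχe k)
  exact Ideal.isCoprime_iff_exists.mpr ⟨e, (hmem i).mpr hij, 1 - e,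
    he.one_sub_mem_of_notMem fun h => (hmem j).mp h rfl, add_sub_cancel _ _⟩

theorem Nat.card_isIdempotentElem_of_isDomain (D : Type*) [CommRing D] [IsDomain D] :
    Nat.card {x : D // IsIdempotentElem x} = 2 := by
  simp_rw [IsIdempotentElem.iff_eq_zero_or_one]
  change Nat.card ({0, 1} : Set D) = 2
  rw [Nat.card_coe_set_eq, Set.ncard_pair zero_ne_one]

theorem Nat.card_isIdempotentElem_pi {ι : Type*} [Finite ι] (T : ι → Type*)
    [∀ i, CommRing (T i)] [∀ i, IsDomain (T i)] :
    Nat.card {f : ∀ i, T i // IsIdempotentElem f} = 2 ^ Nat.card ι := by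
  have e : {f : ∀ i, T i // IsIdempotentElem f} ≃ ∀ i, {x : T i // IsIdempotentElem x} :=
    (Equiv.subtypeEquivRight (q := fun f : ∀ i, T i => ∀ i, IsIdempotentElem (f i))
      fun _ => ⟨fun h i => congrFun h i, funext⟩).trans Equiv.subtypePiEquivPi
  have := Fintype.ofFinite ι
  rw [Nat.card_congr e, Nat.card_pi]
  simp only [Nat.card_isIdempotentElem_of_isDomain, Finset.prod_const, Finset.card_univ,
    Nat.card_eq_fintype_card]

theorem RingEquiv.card_isIdempotentElem {T : Type*} [CommRing T] (e : S ≃+* T) :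
    Nat.card {s : S // IsIdempotentElem s} = Nat.card {t : T // IsIdempotentElem t} :=
  Nat.card_congr <| e.toEquiv.subtypeEquiv fun s =>
    ⟨fun h => h.map e, fun h => by simpa using h.map e.symm⟩

end Idempotents

/-- For a reduced ring `R` with exactly `n` minimal primes, an absolute integral closure
`S` of `R` is `R`-isomorphic to `T = ∏_{p ∈ min(R)} (R/p)⁺` if and only if `S` has exactly
`2 ^ n` idempotents. -/
theorem isomorphic_to_minPlus_iff_idempotents (R : Type u) [CommRing R] [IsReduced R]
    (n : ℕ) (hfin : (minimalPrimes R).Finite) (hn : Nat.card (minimalPrimes R) = n)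
    (S : Type u) [CommRing S] (g : R →+* S) (hg : IsAIC g) :
    (∃ e : S ≃+* ∀ p : minimalPrimes R,
        integralClosure (R ⧸ (p : Ideal R))
          (AlgebraicClosure (FractionRing (R ⧸ (p : Ideal R)))),
      e.toRingHom.comp g = minPlusMap R) ↔
    Nat.card {s : S // IsIdempotentElem s} = 2 ^ n := by
  obtain ⟨hinj, hint, htight, hai⟩ := hg
  have := hfin.to_subtype
  refine ⟨fun ⟨e, _⟩ => by rw [e.card_isIdempotentElem, Nat.card_isIdempotentElem_pi, hn],
    fun hcard => ?_⟩
  let := g.toAlgebra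
  have : Algebra.IsIntegral R S := ⟨hint⟩
  have hover (p : minimalPrimes R) : ∃ Q : Ideal S, Q.IsPrime ∧ Q.LiesOver (p : Ideal R) := by
    obtain ⟨Q, -, hQ, hQp⟩ := Ideal.exists_ideal_over_prime_of_isIntegral (S := S) (p : Ideal R) ⊥
      (Ideal.comap_bot_le_of_injective _ hinj)
    exact ⟨Q, hQ, ⟨hQp.symm⟩⟩
  choose Q hQprime hQover using hover
  have hQ : ⨅ p, Q p = ⊥ := htight.iInf_eq_bot <|
    (iInf_congr fun p => (hQover p).over.symm).trans (iInf_minimalPrimes_eq_bot R)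
  have hcop := pairwise_isCoprime_of_card_isIdempotentElem hQ (by rw [hcard, hn])
  have (p : minimalPrimes R) : FaithfulSMul (R ⧸ (p : Ideal R))
      (AlgebraicClosure (FractionRing (R ⧸ (p : Ideal R)))) :=
    .trans _ (FractionRing (R ⧸ (p : Ideal R))) _
  have Φ (p : minimalPrimes R) :=
    ((hai.of_surjective_s18 (Ideal.Quotient.mk (Q p)) Ideal.Quotient.mk_surjective
      ).nonempty_algEquiv_integralClosure (A := R ⧸ (p : Ideal R))
      (Ω := AlgebraicClosure (FractionRing (R ⧸ (p : Ideal R))))).some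
  refine ⟨((RingEquiv.quotientBot S).symm.trans (Ideal.quotEquivOfEq hQ.symm)).trans
    ((Ideal.quotientInfRingEquivPiQuotient Q hcop).trans
      (RingEquiv.piCongrRight fun p => (Φ p).toRingEquiv)), ?_⟩
  exact RingHom.ext fun r => funext fun p => (Φ p).commutes (Ideal.Quotient.mk _ r)
end
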